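/- For any crowdfunding game Γ(n,B,μ,p,τ) with 2 ≤ B ≤ n and a moderate price (p_l < τ < p_h), there exists a unique symmetric non-trivial Bayes–Nash equilibrium (λ,ψ); moreover this equilibrium satisfies ψ = 1 and λ ∈ [0,1). -/

import Mathlib

open Finset Filter

/-- Upper tail of a Binomial(m,γ): probability of at least `k` successes in `m` trials. -/
noncomputable def phi (γ : ℝ) (m k : ℕ) : ℝ :=
  ∑ j ∈ Finset.Icc k m, (m.choose j : ℝ) * γ ^ j * (1 - γ) ^ (m - j)

/-- Posterior probability of state H given a low signal. -/
noncomputable def pLow (μ p : ℝ) : ℝ := (1 - p) * μ / ((1 - p) * μ + p * (1 - μ))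

/-- Posterior probability of state H given a high signal. -/
noncomputable def pHigh (μ p : ℝ) : ℝ := p * μ / (p * μ + (1 - p) * (1 - μ))

/-- Probability that a player contributes in state H under symmetric strategy (lam, psi). -/
noncomputable def alphaH (p lam psi : ℝ) : ℝ := p * psi + (1 - p) * lam

/-- Probability that a player contributes in state L under symmetric strategy (lam, psi). -/
noncomputable def alphaL (p lam psi : ℝ) : ℝ := (1 - p) * psi + p * lam

/-- Expected utility of contributing for a low-signal player. -/
noncomputable def Ulow (n B : ℕ) (μ p τ lam psi : ℝ) : ℝ :=
  pLow μ p * (1 - τ) * phi (alphaH p lam psi) (n - 1) (B - 1)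
    - (1 - pLow μ p) * τ * phi (alphaL p lam psi) (n - 1) (B - 1)

/-- Expected utility of contributing for a high-signal player. -/
noncomputable def Uhigh (n B : ℕ) (μ p τ lam psi : ℝ) : ℝ :=
  pHigh μ p * (1 - τ) * phi (alphaH p lam psi) (n - 1) (B - 1)
    - (1 - pHigh μ p) * τ * phi (alphaL p lam psi) (n - 1) (B - 1)

/-- (lam, psi) is a symmetric Bayes–Nash equilibrium of Γ(n,B,μ,p,τ). -/
def IsSymmEq (n B : ℕ) (μ p τ lam psi : ℝ) : Prop :=
  lam ∈ Set.Icc (0:ℝ) 1 ∧ psi ∈ Set.Icc (0:ℝ) 1 ∧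
    (0 < lam → 0 ≤ Ulow n B μ p τ lam psi) ∧
    (lam < 1 → Ulow n B μ p τ lam psi ≤ 0) ∧
    (0 < psi → 0 ≤ Uhigh n B μ p τ lam psi) ∧
    (psi < 1 → Uhigh n B μ p τ lam psi ≤ 0)

/-- The strategy profile (lam, psi) is non-trivial: the good is supplied with
positive probability. -/
def NonTrivial (n B : ℕ) (μ p lam psi : ℝ) : Prop :=
  0 < μ * phi (alphaH p lam psi) n B + (1 - μ) * phi (alphaL p lam psi) n B

/-- The correctness index of Γ(n,B,μ,p,τ) at the symmetric strategy (lam, psi). -/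
noncomputable def thetaIdx (n B : ℕ) (μ p lam psi : ℝ) : ℝ :=
  μ * phi (alphaH p lam psi) n B + (1 - μ) * (1 - phi (alphaL p lam psi) n B)

/-- Expected fraction of contributors collected from a Binomial(n,γ) number of
contributors, counted only when the threshold B is met. -/
noncomputable def tailExp (γ : ℝ) (n B : ℕ) : ℝ :=
  ∑ j ∈ Finset.Icc B n, ((j : ℝ) / n) * (n.choose j : ℝ) * γ ^ j * (1 - γ) ^ (n - j)

/-- The participation index of Γ(n,B,μ,p,τ) at the symmetric strategy (lam, psi). -/
noncomputable def partIdx (n B : ℕ) (μ p lam psi : ℝ) : ℝ :=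
  μ * tailExp (alphaH p lam psi) n B + (1 - μ) * tailExp (alphaL p lam psi) n B

/-!
With a moderate price a high-signal player strictly wants to contribute whenever anybody might:
her posterior exceeds `τ`, and her contribution is pivotal at least as often in state H as in
state L. Hence `ψ = 1` in every non-trivial equilibrium. With `ψ = 1` the low-signal payoff
`U_l(λ)` has the sign of `p_l (1 - τ) - (1 - p_l) τ φ(α_L) / φ(α_H)`, and this likelihood ratio
is strictly increasing in `λ` because `φ / φ'` is strictly increasing in `γ` (compare the
binomial terms one by one). So `U_l(·, 1)` changes sign at most once, from `+` to `-`, and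
`U_l(1, 1) = p_l - τ < 0`; the intermediate value theorem gives the unique best response
`λ ∈ [0, 1)`.
-/

noncomputable def phiDeriv (γ : ℝ) (m k : ℕ) : ℝ :=
  k * m.choose k * γ ^ (k - 1) * (1 - γ) ^ (m - k)

section BinomialTail

variable {m k : ℕ}

lemma phi_nonneg {γ : ℝ} (h0 : 0 ≤ γ) (h1 : γ ≤ 1) (m k : ℕ) : 0 ≤ phi γ m k := by
  have : 0 ≤ 1 - γ := by linarith
  unfold phi
  positivity

lemma phi_pos {γ : ℝ} (h0 : 0 < γ) (h1 : γ ≤ 1) (hkm : k ≤ m) : 0 < phi γ m k := by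
  have : 0 ≤ 1 - γ := by linarith
  calc 0 < (m.choose m : ℝ) * γ ^ m * (1 - γ) ^ (m - m) := by simp [pow_pos h0]
    _ ≤ phi γ m k :=
      single_le_sum (f := fun j => (m.choose j : ℝ) * γ ^ j * (1 - γ) ^ (m - j))
        (fun j _ => by positivity) (by simp [hkm])

lemma phi_zero (hk : k ≠ 0) : phi 0 m k = 0 :=
  sum_eq_zero fun j hj => by
    have : j ≠ 0 := by simp only [mem_Icc] at hj; omega
    simp [this]

lemma phi_one (hkm : k ≤ m) : phi 1 m k = 1 := by
  rw [phi, sum_eq_single_of_mem m (by simp [hkm])]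
  · simp
  · intro j hj hjm
    have : m - j ≠ 0 := by simp only [mem_Icc] at hj; omega
    simp [this]

@[fun_prop]
lemma continuous_phi (m k : ℕ) : Continuous fun γ => phi γ m k := by
  unfold phi
  fun_prop

lemma hasDerivAt_binomial_term (m j : ℕ) (γ : ℝ) :
    HasDerivAt (fun x : ℝ => (m.choose j : ℝ) * x ^ j * (1 - x) ^ (m - j))
      (phiDeriv γ m j - phiDeriv γ m (j + 1)) γ := by
  have hchoose : ((j + 1 : ℕ) : ℝ) * m.choose (j + 1) = ((m - j : ℕ) : ℝ) * m.choose j := by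
    exact_mod_cast by rw [mul_comm, Nat.choose_succ_right_eq, mul_comm]
  refine (((hasDerivAt_pow j γ).const_mul _).fun_mul
    (((hasDerivAt_id γ).const_sub 1).pow (m - j))).congr_deriv ?_
  simp only [phiDeriv, id, Pi.pow_apply]
  rw [hchoose, Nat.add_sub_cancel, Nat.sub_add_eq]
  ring

lemma hasDerivAt_phi (hkm : k ≤ m) (γ : ℝ) :
    HasDerivAt (fun x => phi x m k) (phiDeriv γ m k) γ := by
  have hsum : ∑ j ∈ Icc k m, (phiDeriv γ m j - phiDeriv γ m (j + 1)) = phiDeriv γ m k := by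
    have htele := sum_Icc_sub hkm (phiDeriv γ m ·)
    have hlast : phiDeriv γ m (m + 1) = 0 := by simp [phiDeriv]
    simp only [sum_sub_distrib] at htele ⊢
    linarith
  unfold phi
  exact hsum ▸ HasDerivAt.fun_sum fun j _ => hasDerivAt_binomial_term m j γ

lemma phiDeriv_nonneg {γ : ℝ} (h0 : 0 ≤ γ) (h1 : γ ≤ 1) (m k : ℕ) : 0 ≤ phiDeriv γ m k := by
  have : 0 ≤ 1 - γ := by linarith
  unfold phiDeriv
  positivity

lemma phi_monotoneOn (hkm : k ≤ m) : MonotoneOn (fun γ => phi γ m k) (Set.Icc 0 1) :=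
  monotoneOn_of_hasDerivWithinAt_nonneg (convex_Icc 0 1) (continuous_phi m k).continuousOn
    (fun γ _ => (hasDerivAt_phi hkm γ).hasDerivWithinAt)
    (fun γ hγ => by
      rw [interior_Icc] at hγ
      exact phiDeriv_nonneg hγ.1.le hγ.2.le m k)

lemma pow_succ_mul_one_sub_pow_lt {a A : ℝ} (ha : 0 ≤ a) (haA : a < A) (hA : A ≤ 1) (i : ℕ) :
    a ^ (i + 1) * (1 - A) ^ i < A ^ (i + 1) * (1 - a) ^ i :=
  calc a ^ (i + 1) * (1 - A) ^ i ≤ a ^ (i + 1) * (1 - a) ^ i := by gcongr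
    _ < A ^ (i + 1) * (1 - a) ^ i :=
        mul_lt_mul_of_pos_right (pow_lt_pow_left₀ haA ha i.succ_ne_zero)
          (pow_pos (by linarith) i)

lemma phi_mul_phiDeriv_lt (hk : k ≠ 0) (hkm : k ≤ m) {a A : ℝ} (ha : 0 < a) (haA : a < A)
    (hA : A < 1) : phi a m k * phiDeriv A m k < phi A m k * phiDeriv a m k := by
  unfold phi
  rw [sum_mul, sum_mul]
  refine sum_lt_sum_of_nonempty (nonempty_Icc.mpr hkm) fun j hj => ?_
  obtain ⟨u, rfl⟩ := Nat.exists_eq_add_of_le' (Nat.one_le_iff_ne_zero.mpr hk)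
  obtain ⟨i, rfl⟩ := Nat.exists_eq_add_of_le (mem_Icc.mp hj).1
  obtain ⟨w, rfl⟩ := Nat.exists_eq_add_of_le (mem_Icc.mp hj).2
  have hA' : 0 < 1 - A := by linarith
  have ha' : 0 < 1 - a := by linarith
  have hc : (0 : ℝ) < ((u + 1 + i + w).choose (u + 1 + i)) * (u + 1 : ℕ) *
      ((u + 1 + i + w).choose (u + 1)) * a ^ u * A ^ u * (1 - a) ^ w * (1 - A) ^ w := by
    have : (0 : ℝ) < (u + 1 + i + w).choose (u + 1 + i) := by
      exact_mod_cast Nat.choose_pos (by omega)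
    have : (0 : ℝ) < (u + 1 + i + w).choose (u + 1) := by
      exact_mod_cast Nat.choose_pos (by omega)
    have : 0 < A := ha.trans haA
    positivity
  have key := mul_lt_mul_of_pos_left
    (pow_succ_mul_one_sub_pow_lt ha.le haA hA.le i) hc
  simp only [phiDeriv, Nat.add_sub_cancel, Nat.add_sub_cancel_left,
    show u + 1 + i + w - (u + 1) = i + w by omega]
  convert key using 1 <;> ring

end BinomialTail

section Game

variable {n B : ℕ} {μ p τ : ℝ}

lemma pHigh_le_one (hμ0 : 0 ≤ μ) (hμ1 : μ ≤ 1) (hp0 : 0 ≤ p) (hp1 : p ≤ 1) :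
    pHigh μ p ≤ 1 := by
  have : 0 ≤ (1 - p) * (1 - μ) := mul_nonneg (by linarith) (by linarith)
  exact div_le_one_of_le₀ (by linarith) (by positivity)

lemma alphaL_pos (hp0 : 0 ≤ p) (hp1 : p < 1) {lam : ℝ} (h0 : 0 ≤ lam) : 0 < alphaL p lam 1 := by
  unfold alphaL
  nlinarith

lemma alphaH_pos (hp0 : 0 < p) (hp1 : p ≤ 1) {lam : ℝ} (h0 : 0 ≤ lam) : 0 < alphaH p lam 1 := by
  unfold alphaH
  nlinarith

lemma alphaL_le_alphaH (hp : 1 / 2 ≤ p) {lam : ℝ} (h1 : lam ≤ 1) :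
    alphaL p lam 1 ≤ alphaH p lam 1 := by
  unfold alphaL alphaH
  nlinarith

lemma alphaL_lt_alphaH (hp : 1 / 2 < p) {lam : ℝ} (h1 : lam < 1) :
    alphaL p lam 1 < alphaH p lam 1 := by
  unfold alphaL alphaH
  nlinarith

lemma alphaH_le_one (hp1 : p ≤ 1) {lam : ℝ} (h1 : lam ≤ 1) : alphaH p lam 1 ≤ 1 := by
  unfold alphaH
  nlinarith

lemma alphaH_lt_one (hp1 : p < 1) {lam : ℝ} (h1 : lam < 1) : alphaH p lam 1 < 1 := by
  unfold alphaH
  nlinarith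

lemma phi_alphaH_one_pos {m k : ℕ} (hkm : k ≤ m) (hp0 : 0 < p) (hp1 : p ≤ 1) {lam : ℝ}
    (h0 : 0 ≤ lam) (h1 : lam ≤ 1) : 0 < phi (alphaH p lam 1) m k :=
  phi_pos (alphaH_pos hp0 hp1 h0) (alphaH_le_one hp1 h1) hkm

lemma Ulow_one_one (hB : B ≤ n) : Ulow n B μ p τ 1 1 = pLow μ p - τ := by
  have hα : alphaH p 1 1 = 1 ∧ alphaL p 1 1 = 1 := by
    constructor <;> simp only [alphaH, alphaL] <;> ring
  rw [Ulow, hα.1, hα.2, phi_one (Nat.sub_le_sub_right hB 1)]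
  ring

lemma continuous_Ulow_one (n B : ℕ) (μ p τ : ℝ) : Continuous fun lam => Ulow n B μ p τ lam 1 := by
  unfold Ulow alphaH alphaL
  fun_prop

lemma Uhigh_pos (hB : B ≤ n) (hτ0 : 0 ≤ τ) (hτ : τ < pHigh μ p) (hph : pHigh μ p ≤ 1)
    {lam psi : ℝ} (hL0 : 0 ≤ alphaL p lam psi) (hLH : alphaL p lam psi ≤ alphaH p lam psi)
    (hH0 : 0 < alphaH p lam psi) (hH1 : alphaH p lam psi ≤ 1) :
    0 < Uhigh n B μ p τ lam psi := by
  have hkm := Nat.sub_le_sub_right hB 1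
  have hmono := phi_monotoneOn hkm ⟨hL0, hLH.trans hH1⟩ ⟨hH0.le, hH1⟩ hLH
  have hpos := phi_pos hH0 hH1 hkm
  have hc : 0 ≤ (1 - pHigh μ p) * τ := mul_nonneg (by linarith) hτ0
  calc 0 < (pHigh μ p - τ) * phi (alphaH p lam psi) (n - 1) (B - 1) :=
        mul_pos (by linarith) hpos
    _ = pHigh μ p * (1 - τ) * phi (alphaH p lam psi) (n - 1) (B - 1)
          - (1 - pHigh μ p) * τ * phi (alphaH p lam psi) (n - 1) (B - 1) := by ring
    _ ≤ Uhigh n B μ p τ lam psi := by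
        unfold Uhigh
        gcongr

lemma alphaH_pos_of_nonTrivial (hB : B ≠ 0) (hp0 : 0 < p) (hp1 : p < 1) {lam psi : ℝ}
    (hlam : 0 ≤ lam) (hpsi : 0 ≤ psi) (h : NonTrivial n B μ p lam psi) :
    0 < alphaH p lam psi := by
  by_contra hH
  unfold alphaH at hH
  obtain rfl : psi = 0 := by nlinarith
  obtain rfl : lam = 0 := by nlinarith
  simp [NonTrivial, alphaH, alphaL, phi_zero hB] at h

lemma nonTrivial_one (hB : B ≤ n) (hμ0 : 0 < μ) (hμ1 : μ ≤ 1) (hp : 1 / 2 ≤ p) (hp1 : p < 1)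
    {lam : ℝ} (h0 : 0 ≤ lam) (h1 : lam ≤ 1) : NonTrivial n B μ p lam 1 := by
  have hH := phi_alphaH_one_pos hB (by linarith) hp1.le h0 h1
  have hL : 0 ≤ phi (alphaL p lam 1) n B :=
    phi_nonneg (alphaL_pos (by linarith) hp1 h0).le
      ((alphaL_le_alphaH hp h1).trans (alphaH_le_one hp1.le h1)) n B
  unfold NonTrivial
  positivity

lemma Uhigh_one_pos (hB : B ≤ n) (hp : 1 / 2 ≤ p) (hp1 : p < 1) (hτ0 : 0 ≤ τ)
    (hτ : τ < pHigh μ p) (hph : pHigh μ p ≤ 1) {lam : ℝ} (h0 : 0 ≤ lam) (h1 : lam ≤ 1) :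
    0 < Uhigh n B μ p τ lam 1 :=
  Uhigh_pos hB hτ0 hτ hph (alphaL_pos (by linarith) hp1 h0).le (alphaL_le_alphaH hp h1)
    (alphaH_pos (by linarith) hp1.le h0) (alphaH_le_one hp1.le h1)

lemma psi_eq_one_of_isSymmEq (hB0 : B ≠ 0) (hB : B ≤ n) (hp : 1 / 2 < p) (hp1 : p < 1)
    (hτ0 : 0 ≤ τ) (hτ1 : τ < 1) (hpl : pLow μ p < τ) (hph : τ < pHigh μ p)
    (hph1 : pHigh μ p ≤ 1) {lam psi : ℝ} (h : IsSymmEq n B μ p τ lam psi)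
    (hN : NonTrivial n B μ p lam psi) : psi = 1 := by
  obtain ⟨⟨hlam0, hlam1⟩, ⟨hpsi0, hpsi1⟩, hUl, -, -, hUh⟩ := h
  by_contra hne
  have hUh' := hUh (hpsi1.lt_of_ne hne)
  have hH := alphaH_pos_of_nonTrivial hB0 (by linarith) hp1 hlam0 hpsi0 hN
  have hH1 : alphaH p lam psi ≤ 1 := by unfold alphaH; nlinarith
  have hL0 : 0 ≤ alphaL p lam psi := by unfold alphaL; nlinarith
  have hL1 : alphaL p lam psi ≤ 1 := by unfold alphaL; nlinarith
  have hφH := phi_pos hH hH1 (Nat.sub_le_sub_right hB 1)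
  have hφL := phi_nonneg hL0 hL1 (n - 1) (B - 1)
  have hUl' : Ulow n B μ p τ lam psi < 0 := by
    have hgap : Uhigh n B μ p τ lam psi - Ulow n B μ p τ lam psi
        = (pHigh μ p - pLow μ p) * ((1 - τ) * phi (alphaH p lam psi) (n - 1) (B - 1)
            + τ * phi (alphaL p lam psi) (n - 1) (B - 1)) := by
      unfold Uhigh Ulow
      ring
    have : 0 < (pHigh μ p - pLow μ p) * ((1 - τ) * phi (alphaH p lam psi) (n - 1) (B - 1)
        + τ * phi (alphaL p lam psi) (n - 1) (B - 1)) :=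
      mul_pos (by linarith) (add_pos_of_pos_of_nonneg (mul_pos (by linarith) hφH)
        (mul_nonneg hτ0 hφL))
    linarith
  obtain rfl : lam = 0 := le_antisymm (not_lt.1 fun h => (hUl h).not_gt hUl') hlam0
  have hLH : alphaL p 0 psi ≤ alphaH p 0 psi := by unfold alphaL alphaH; nlinarith
  exact (Uhigh_pos hB hτ0 hph hph1 hL0 hLH hH hH1).not_ge hUh'

lemma phi_alphaL_div_phi_alphaH_strictMonoOn {m k : ℕ} (hk : k ≠ 0) (hkm : k ≤ m)
    (hp : 1 / 2 < p) (hp1 : p < 1) :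
    StrictMonoOn (fun lam => phi (alphaL p lam 1) m k / phi (alphaH p lam 1) m k)
      (Set.Icc 0 1) := by
  have hHpos : ∀ lam ∈ Set.Icc (0 : ℝ) 1, 0 < phi (alphaH p lam 1) m k := fun lam h =>
    phi_alphaH_one_pos hkm (by linarith) hp1.le h.1 h.2
  refine strictMonoOn_of_deriv_pos (convex_Icc 0 1) ?_ fun lam hlam => ?_
  · exact ((continuous_phi m k).comp (by unfold alphaL; fun_prop)).continuousOn.div
      ((continuous_phi m k).comp (by unfold alphaH; fun_prop)).continuousOn
      fun lam h => (hHpos lam h).ne'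
  rw [interior_Icc] at hlam
  have hL : HasDerivAt (fun l => phi (alphaL p l 1) m k)
      (phiDeriv (alphaL p lam 1) m k * p) lam :=
    (hasDerivAt_phi hkm _).comp lam <| by
      simpa [alphaL] using ((hasDerivAt_id lam).const_mul p).const_add (1 - p)
  have hH : HasDerivAt (fun l => phi (alphaH p l 1) m k)
      (phiDeriv (alphaH p lam 1) m k * (1 - p)) lam :=
    (hasDerivAt_phi hkm _).comp lam <| by
      simpa [alphaH] using ((hasDerivAt_id lam).const_mul (1 - p)).const_add p
  have hφH := hHpos lam (Set.Ioo_subset_Icc_self hlam)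
  rw [(hL.fun_div hH hφH.ne').deriv]
  have ha0 := alphaL_pos (by linarith) hp1 hlam.1.le
  have haA := alphaL_lt_alphaH hp hlam.2
  have hA1 := alphaH_lt_one hp1 hlam.2
  have hlt := phi_mul_phiDeriv_lt hk hkm ha0 haA hA1
  have hnn : 0 ≤ phi (alphaL p lam 1) m k * phiDeriv (alphaH p lam 1) m k :=
    mul_nonneg (phi_nonneg ha0.le (haA.trans hA1).le m k)
      (phiDeriv_nonneg (ha0.trans haA).le hA1.le m k)
  apply div_pos _ (by positivity)
  nlinarith

lemma Ulow_one_neg_of_nonpos (hB1 : 2 ≤ B) (hB : B ≤ n) (hp : 1 / 2 < p) (hp1 : p < 1)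
    (hτ0 : 0 < τ) (hpl : pLow μ p < 1) {l₁ l₂ : ℝ} (h₀ : 0 ≤ l₁) (hlt : l₁ < l₂) (h₁ : l₂ ≤ 1)
    (hU : Ulow n B μ p τ l₁ 1 ≤ 0) : Ulow n B μ p τ l₂ 1 < 0 := by
  have hkm := Nat.sub_le_sub_right hB 1
  have hφH₁ := phi_alphaH_one_pos hkm (by linarith) hp1.le h₀ (hlt.le.trans h₁)
  have hφH₂ := phi_alphaH_one_pos hkm (by linarith) hp1.le (h₀.trans hlt.le) h₁
  have hratio := phi_alphaL_div_phi_alphaH_strictMonoOn (by omega) hkm hp hp1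
    ⟨h₀, hlt.le.trans h₁⟩ ⟨h₀.trans hlt.le, h₁⟩ hlt
  rw [div_lt_div_iff₀ hφH₁ hφH₂] at hratio
  have hc : 0 < (1 - pLow μ p) * τ := mul_pos (by linarith) hτ0
  unfold Ulow at hU ⊢
  nlinarith [mul_lt_mul_of_pos_left hratio hc, mul_le_mul_of_nonneg_right hU hφH₂.le]

lemma lam_lt_one_of_isSymmEq (hB : B ≤ n) (hpl : pLow μ p < τ) {lam : ℝ}
    (h : IsSymmEq n B μ p τ lam 1) : lam < 1 := by
  refine h.1.2.lt_of_ne fun hlam => ?_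
  have := h.2.2.1 (by rw [hlam]; exact one_pos)
  rw [hlam, Ulow_one_one hB] at this
  linarith

lemma eq_of_isSymmEq_one (hB1 : 2 ≤ B) (hB : B ≤ n) (hp : 1 / 2 < p) (hp1 : p < 1)
    (hτ0 : 0 < τ) (hτ1 : τ < 1) (hpl : pLow μ p < τ) {l₁ l₂ : ℝ}
    (h₁ : IsSymmEq n B μ p τ l₁ 1) (h₂ : IsSymmEq n B μ p τ l₂ 1) : l₁ = l₂ := by
  have key : ∀ {a b : ℝ}, IsSymmEq n B μ p τ a 1 → IsSymmEq n B μ p τ b 1 → ¬ a < b :=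
    fun ha hb hab => (Ulow_one_neg_of_nonpos hB1 hB hp hp1 hτ0 (by linarith) ha.1.1 hab hb.1.2
      (ha.2.2.2.1 (lam_lt_one_of_isSymmEq hB hpl ha))).not_ge (hb.2.2.1 (ha.1.1.trans_lt hab))
  exact le_antisymm (not_lt.1 (key h₂ h₁)) (not_lt.1 (key h₁ h₂))

lemma exists_isSymmEq_one (hB : B ≤ n) (hp : 1 / 2 ≤ p) (hp1 : p < 1) (hτ0 : 0 ≤ τ)
    (hpl : pLow μ p < τ) (hph : τ < pHigh μ p) (hph1 : pHigh μ p ≤ 1) :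
    ∃ lam ∈ Set.Ico (0 : ℝ) 1, IsSymmEq n B μ p τ lam 1 := by
  suffices ∃ lam ∈ Set.Ico (0 : ℝ) 1,
      Ulow n B μ p τ lam 1 ≤ 0 ∧ (0 < lam → 0 ≤ Ulow n B μ p τ lam 1) by
    obtain ⟨lam, hlam, hle, hge⟩ := this
    exact ⟨lam, hlam, ⟨hlam.1, hlam.2.le⟩, ⟨zero_le_one, le_rfl⟩, hge, fun _ => hle,
      fun _ => (Uhigh_one_pos hB hp hp1 hτ0 hph hph1 hlam.1 hlam.2.le).le,
      fun h => absurd h (lt_irrefl 1)⟩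
  by_cases h0 : Ulow n B μ p τ 0 1 ≤ 0
  · exact ⟨0, ⟨le_rfl, zero_lt_one⟩, h0, fun h => absurd h (lt_irrefl 0)⟩
  have hmem : (0 : ℝ) ∈ Set.Ioo (Ulow n B μ p τ 1 1) (Ulow n B μ p τ 0 1) := by
    rw [Ulow_one_one hB]
    exact ⟨by linarith, not_le.1 h0⟩
  obtain ⟨lam, hlam, hzero⟩ :=
    intermediate_value_Ioo' zero_le_one (continuous_Ulow_one n B μ p τ).continuousOn hmem
  exact ⟨lam, ⟨hlam.1.le, hlam.2⟩, hzero.le, fun _ => hzero.ge⟩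

end Game

/-- with a moderate price there is a unique symmetric non-trivial
Bayes–Nash equilibrium, in which high-signal players surely contribute and
low-signal players contribute with probability in [0,1). -/
theorem stmt8 (n B : ℕ) (μ p τ : ℝ) (hB1 : 2 ≤ B) (hB2 : B ≤ n)
    (hμ : μ ∈ Set.Ioo (0:ℝ) 1) (hp : p ∈ Set.Ioo (1/2 : ℝ) 1) (hτ : τ ∈ Set.Ioo (0:ℝ) 1)
    (hmod : pLow μ p < τ ∧ τ < pHigh μ p) :
    ∃ lam psi : ℝ,
      (IsSymmEq n B μ p τ lam psi ∧ NonTrivial n B μ p lam psi) ∧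
      psi = 1 ∧ 0 ≤ lam ∧ lam < 1 ∧
      (∀ lam' psi', IsSymmEq n B μ p τ lam' psi' → NonTrivial n B μ p lam' psi' →
        lam' = lam ∧ psi' = psi) := by
  obtain ⟨hμ0, hμ1⟩ := hμ
  obtain ⟨hp, hp1⟩ := hp
  obtain ⟨hτ0, hτ1⟩ := hτ
  obtain ⟨hpl, hph⟩ := hmod
  have hph1 := pHigh_le_one hμ0.le hμ1.le (by linarith) hp1.le
  obtain ⟨lam, ⟨hlam0, hlam1⟩, hE⟩ :=
    exists_isSymmEq_one hB2 hp.le hp1 hτ0.le hpl hph hph1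
  refine ⟨lam, 1, ⟨hE, nonTrivial_one hB2 hμ0 hμ1.le hp.le hp1 hlam0 hlam1.le⟩, rfl, hlam0,
    hlam1, fun lam' psi' hE' hN' => ?_⟩
  obtain rfl := psi_eq_one_of_isSymmEq (by omega) hB2 hp hp1 hτ0.le hτ1 hpl hph hph1 hE' hN'
  exact ⟨eq_of_isSymmEq_one hB1 hB2 hp hp1 hτ0 hτ1 hpl hE' hE, rfl⟩
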